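/- arXiv:2306.04534 — 5 statements merged into one kernel-verified Lean document; each statement's English description precedes it below -/
import Mathlib

section
/- A family (a_i)_{i∈I} in an implicative algebra is uniformly supercompact (U-SK) if and only if: for every family of pairwise disjoint index sets (K_i)_{i∈I}, and families (b^k_j)_{j∈J_k} for each k ∈ ⋃_i K_i, if ⋀_{i∈I}(a_i → ⋀_{k∈K_i} ∃_{j∈J_k} b^k_j) ∈ Σ then there is a function g ∈ Π_{k∈⋃K_i} J_k with ⋀_{i∈I}(a_i → ⋀_{k∈K_i} b^k_{g(k)}) ∈ Σ. -/
structure ImpStr (α : Type) [CompleteLattice α] where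
  imp : α → α → α
  imp_mono : ∀ {a a' b b' : α}, a' ≤ a → b ≤ b' → imp a b ≤ imp a' b'
  imp_iInf : ∀ (a : α) (B : Set α), imp a (sInf B) = ⨅ b ∈ B, imp a b

namespace ImpStr

variable {α : Type} [CompleteLattice α] (S : ImpStr α)

/-- Application: `a · b := ⋀ {x | a ≤ b → x}`. -/
def app (a b : α) : α := sInf {x | a ≤ S.imp b x}

/-- Abstraction of a function `f : α → α`: `λ(f) := ⋀_{a} (a → f a)`. -/
def lam (f : α → α) : α := ⨅ a : α, S.imp a (f a)

end ImpStr

structure ImpAlg (α : Type) [CompleteLattice α] extends ImpStr α where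
  Sep : Set α
  sep_up : ∀ {a b : α}, a ∈ Sep → a ≤ b → b ∈ Sep
  sep_K : (⨅ a : α, ⨅ b : α, imp a (imp b a)) ∈ Sep
  sep_S : (⨅ a : α, ⨅ b : α, ⨅ c : α,
      imp (imp a (imp b c)) (imp (imp a b) (imp a c))) ∈ Sep
  sep_mp : ∀ {a b : α}, imp a b ∈ Sep → a ∈ Sep → b ∈ Sep

namespace ImpAlg

variable {α : Type} [CompleteLattice α] (A : ImpAlg α)

/-- Entailment: `a ⊢_Σ b` iff `(a → b) ∈ Σ`. -/
def Ent (a b : α) : Prop := A.imp a b ∈ A.Sep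

/-- `a ≡_Σ b` -/
def EquivS (a b : α) : Prop := A.Ent a b ∧ A.Ent b a

/-- The existential quantifier `∃_{i∈I} c_i := ⋀_x (⋀_i (c_i → x) → x)`. -/
def Eex {I : Type} (c : I → α) : α := ⨅ x : α, A.imp (⨅ i, A.imp (c i) x) x

/-- `a × b := ⋀_x ((a → b → x) → x)`. -/
def times (a b : α) : α := ⨅ x : α, A.imp (A.imp a (A.imp b x)) x

open Classical in
/-- `δ_I(j,j')`. -/
noncomputable def delta {I : Type} (j j' : I) : α :=
  if j = j' then ⨅ x : α, A.imp (A.imp ⊤ x) x else A.imp ⊤ ⊥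

/-- ×-disjoint family. -/
def TimesDisjoint {I : Type} (a : I → α) : Prop :=
  (⨅ i, ⨅ i', A.imp (A.times (a i) (a i')) (A.delta i i')) ∈ A.Sep

/-- ∧-disjoint family. -/
def WedgeDisjoint {I : Type} (a : I → α) : Prop :=
  (⨅ i, ⨅ i', A.imp (a i ⊓ a i') (A.delta i i')) ∈ A.Sep

/-- ×-functional two-indexed family. -/
def TimesFunctional {I J : Type} (b : I → J → α) : Prop :=
  (⨅ i, ⨅ j, ⨅ j', A.imp (A.times (b i j) (b i j')) (A.delta j j')) ∈ A.Sep

/-- Supercompact element. -/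
def Supercompact (a : α) : Prop :=
  ∀ {I : Type} (b : I → α), A.Ent a (A.Eex b) → ∃ i, A.Ent a (b i)

/-- Indecomposable element. -/
def Indecomposable (a : α) : Prop :=
  ∀ {I : Type} (b : I → α), A.TimesDisjoint b → A.Ent a (A.Eex b) → ∃ i, A.Ent a (b i)

/-- Supercompact (SK) family. -/
def SKFam {I : Type} (a : I → α) : Prop :=
  ∀ (J : I → Type) (b : ∀ i, J i → α),
    (⨅ i, A.imp (a i) (A.Eex (b i))) ∈ A.Sep →
    ∃ f : ∀ i, J i, (⨅ i, A.imp (a i) (b i (f i))) ∈ A.Sep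

/-- Uniformly supercompact (U-SK) family. -/
def USKFam {I : Type} (a : I → α) : Prop :=
  ∀ {K : Type} (f : K → I), A.SKFam (a ∘ f)

/-- Componentwise supercompact (cSK) family. -/
def cSKFam {I : Type} (a : I → α) : Prop := ∀ i, A.Supercompact (a i)

/-- Functionally supercompact (fSK) family. -/
def fSKFam {I : Type} (a : I → α) : Prop :=
  ∀ {J : Type} (b : I → J → α), A.TimesFunctional b →
    (⨅ i, A.imp (a i) (A.Eex (b i))) ∈ A.Sep →
    ∃! f : I → J, (⨅ i, A.imp (a i) (b i (f i))) ∈ A.Sep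

/-- Weakly functionally supercompact (wfSK) family. -/
def wfSKFam {I : Type} (a : I → α) : Prop :=
  ∀ {J : Type} (b : I → J → α), A.TimesFunctional b →
    (⨅ i, A.imp (a i) (A.Eex (b i))) ∈ A.Sep →
    ∃ f : I → J, (⨅ i, A.imp (a i) (b i (f i))) ∈ A.Sep

/-- Uniformly functionally supercompact (U-fSK) family. -/
def UfSKFam {I : Type} (a : I → α) : Prop :=
  ∀ {K : Type} (f : K → I), A.fSKFam (a ∘ f)

/-- Uniformly weakly functionally supercompact (U-wfSK) family. -/
def UwfSKFam {I : Type} (a : I → α) : Prop :=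
  ∀ {K : Type} (f : K → I), A.wfSKFam (a ∘ f)

/-- Componentwise indecomposable (cInd) family. -/
def cIndFam {I : Type} (a : I → α) : Prop := ∀ i, A.Indecomposable (a i)

end ImpAlg


lemma imp_iInf' {α : Type} [CompleteLattice α] (A : ImpAlg α) {ι : Type}
    (x : α) (c : ι → α) : A.imp x (⨅ i, c i) = ⨅ i, A.imp x (c i) := by
  rw [iInf, A.imp_iInf, iInf_range]

lemma sigma_fiber_iInf {β : Type} [CompleteLattice β] {I K : Type} (f : K → I)
    (g : K → β) :
    (⨅ σ : Σ i, {k : K // f k = i}, g σ.2.1) = ⨅ k, g k := by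
  apply le_antisymm
  · exact le_iInf fun k => iInf_le_of_le ⟨f k, k, rfl⟩ le_rfl
  · exact le_iInf fun σ => iInf_le _ σ.2.1

lemma split_iInf {α : Type} [CompleteLattice α] (A : ImpAlg α) {I : Type}
    {K : I → Type} (a : I → α) (c : (Σ i, K i) → α) :
    (⨅ σ : Σ i, K i, A.imp (a σ.1) (c σ))
      = ⨅ i, A.imp (a i) (⨅ k : K i, c ⟨i, k⟩) := by
  rw [iInf_sigma]
  exact iInf_congr fun i => (imp_iInf' A (a i) (fun k => c ⟨i, k⟩)).symm

/-- a family is U-SK iff for every family of pairwise disjoint index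
sets `(K_i)` (modelled by the disjoint union `Σ i, K i`) and families `(b^k_j)`, any
uniform existential cover admits a uniform choice function. -/
theorem stmt10 {α : Type} [CompleteLattice α] (A : ImpAlg α)
    {I : Type} (a : I → α) :
    A.USKFam a ↔
      ∀ (K : I → Type) (J : (Σ i, K i) → Type) (b : ∀ k : Σ i, K i, J k → α),
        (⨅ i, A.imp (a i) (⨅ k : K i, A.Eex (b ⟨i, k⟩))) ∈ A.Sep →
        ∃ g : ∀ k : Σ i, K i, J k,
          (⨅ i, A.imp (a i) (⨅ k : K i, b ⟨i, k⟩ (g ⟨i, k⟩))) ∈ A.Sep := by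
  constructor
  · intro hUSK K J b hyp
    have hSK := hUSK (fun σ : Σ i, K i => σ.1)
    obtain ⟨g, hg⟩ := hSK J b
      (A.sep_up hyp (le_of_eq (split_iInf A a (fun σ => A.Eex (b σ))).symm))
    exact ⟨g, A.sep_up hg (le_of_eq (split_iInf A a (fun σ => b σ (g σ))))⟩
  · intro h K f J b hyp
    have key := h (fun i => {k : K // f k = i}) (fun σ => J σ.2.1) (fun σ => b σ.2.1)
    have eq1 : (⨅ i, A.imp (a i) (⨅ k : {k : K // f k = i}, A.Eex (b k.1)))
        = ⨅ k, A.imp (a (f k)) (A.Eex (b k)) :=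
      (split_iInf A a (fun σ => A.Eex (b σ.2.1))).symm.trans
        ((iInf_congr (by rintro ⟨i, k, hk⟩; subst hk; rfl)).trans
          (sigma_fiber_iInf f (fun k => A.imp (a (f k)) (A.Eex (b k)))))
    obtain ⟨g, hg⟩ := key (A.sep_up hyp (le_of_eq eq1.symm))
    refine ⟨fun k => g ⟨f k, ⟨k, rfl⟩⟩, ?_⟩
    have eq2 : (⨅ i, A.imp (a i)
          (⨅ k : {k : K // f k = i}, b k.1 (g ⟨i, k⟩)))
        = ⨅ k, A.imp (a (f k)) (b k (g ⟨f k, ⟨k, rfl⟩⟩)) :=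
      (split_iInf A a (fun σ => b σ.2.1 (g σ))).symm.trans
        ((iInf_congr (by rintro ⟨i, k, hk⟩; subst hk; rfl)).trans
          (sigma_fiber_iInf f (fun k => A.imp (a (f k)) (b k (g ⟨f k, ⟨k, rfl⟩⟩)))))
    exact A.sep_up hg (le_of_eq eq2)
end

section
/- If a family (a_i)_{i∈I} in an implicative algebra is weakly functionally supercompact (wfSK) and a_i is not Σ-equivalent to ⊥ for every i ∈ I, then (a_i)_{i∈I} is functionally supercompact (fSK), i.e., the tracking function is unique. -/
namespace ImpStr

variable {α : Type} [CompleteLattice α] (S : ImpStr α)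

lemma le_app (a b : α) : a ≤ S.imp b (S.app a b) := by
  rw [app, imp_iInf]
  exact le_iInf₂ fun x hx => hx

lemma app_le {a b b' c : α} (h : a ≤ S.imp b' c) (hb : b ≤ b') : S.app a b ≤ c :=
  sInf_le (le_trans h (S.imp_mono hb le_rfl))

lemma red {a b c : α} (h : a ≤ S.imp b c) : S.app a b ≤ c := S.app_le h le_rfl

lemma app_mono {a a' b b' : α} (ha : a ≤ a') (hb : b ≤ b') : S.app a b ≤ S.app a' b' :=
  sInf_le_sInf fun _ hx => le_trans ha (le_trans hx (S.imp_mono hb le_rfl))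


end ImpStr

namespace ImpAlg

variable {α : Type} [CompleteLattice α] (A : ImpAlg α)

def Kc : α := ⨅ a : α, ⨅ b : α, A.imp a (A.imp b a)
def Sc : α := ⨅ a : α, ⨅ b : α, ⨅ c : α,
    A.imp (A.imp a (A.imp b c)) (A.imp (A.imp a b) (A.imp a c))

lemma Kc_sep : A.Kc ∈ A.Sep := A.sep_K
lemma Sc_sep : A.Sc ∈ A.Sep := A.sep_S

lemma sep_app {a b : α} (ha : a ∈ A.Sep) (hb : b ∈ A.Sep) :
    A.toImpStr.app a b ∈ A.Sep :=
  A.sep_mp (A.sep_up ha (A.toImpStr.le_app a b)) hb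

lemma Kc_red (x y : α) : A.toImpStr.app (A.toImpStr.app A.Kc x) y ≤ x := by
  have h1 : A.Kc ≤ A.imp x (A.imp y x) := le_trans (iInf_le _ x) (iInf_le _ y)
  exact A.toImpStr.red (A.toImpStr.red h1)

lemma Sc_red (x y z : α) :
    A.toImpStr.app (A.toImpStr.app (A.toImpStr.app A.Sc x) y) z ≤
      A.toImpStr.app (A.toImpStr.app x z) (A.toImpStr.app y z) := by
  set T := A.toImpStr
  set xz := T.app x z
  set yz := T.app y z
  set t := T.app xz yz
  have h1 : A.Sc ≤ A.imp (A.imp z (A.imp yz t)) (A.imp (A.imp z yz) (A.imp z t)) :=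
    le_trans (iInf_le _ z) (le_trans (iInf_le _ yz) (iInf_le _ t))
  have hx : x ≤ A.imp z (A.imp yz t) :=
    le_trans (T.le_app x z) (A.imp_mono le_rfl (T.le_app xz yz))
  have h2 : T.app A.Sc x ≤ A.imp (A.imp z yz) (A.imp z t) := T.app_le h1 hx
  have h3 : T.app (T.app A.Sc x) y ≤ A.imp z t := T.app_le h2 (T.le_app y z)
  exact T.red h3

def Ic : α := A.toImpStr.app (A.toImpStr.app A.Sc A.Kc) A.Kc

lemma Ic_sep : A.Ic ∈ A.Sep := A.sep_app (A.sep_app A.Sc_sep A.Kc_sep) A.Kc_sep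

lemma Ic_red (x : α) : A.toImpStr.app A.Ic x ≤ x :=
  le_trans (A.Sc_red A.Kc A.Kc x) (A.Kc_red x _)

lemma top_sep : (⊤ : α) ∈ A.Sep := A.sep_up A.sep_K le_top

lemma sep_imp_of {s c d : α} (hs : s ∈ A.Sep) (h : A.toImpStr.app s c ≤ d) :
    A.imp c d ∈ A.Sep :=
  A.sep_up hs (le_trans (A.toImpStr.le_app s c) (A.imp_mono le_rfl h))

lemma bot_equiv_of {c u v : α} (hc1 : A.imp c u ∈ A.Sep) (hc2 : A.imp c v ∈ A.Sep)
    (hF : A.imp (A.times u v) (A.imp ⊤ ⊥) ∈ A.Sep) : A.EquivS c ⊥ := by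
  set T := A.toImpStr with hT
  set e₁ := A.imp c u
  set e₂ := A.imp c v
  set Fi := A.imp (A.times u v) (A.imp ⊤ ⊥)
  -- combinators
  set SI := T.app A.Sc A.Ic with hSI
  set SKK := T.app A.Sc (T.app A.Kc A.Kc) with hSKK
  set N₁ := T.app (T.app A.Sc (T.app A.Kc SI)) (T.app SKK e₁) with hN₁
  set N₂ := T.app SKK e₂ with hN₂
  set sP := T.app (T.app A.Sc (T.app (T.app A.Sc (T.app A.Kc A.Sc)) N₁)) N₂ with hsP
  set s := T.app (T.app A.Sc (T.app (T.app A.Sc (T.app A.Kc Fi)) sP)) (T.app A.Kc (⊤ : α))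
    with hs
  have hSKKs : SKK ∈ A.Sep := A.sep_app A.Sc_sep (A.sep_app A.Kc_sep A.Kc_sep)
  have hN1s : N₁ ∈ A.Sep :=
    A.sep_app (A.sep_app A.Sc_sep (A.sep_app A.Kc_sep
      (A.sep_app A.Sc_sep A.Ic_sep))) (A.sep_app hSKKs hc1)
  have hN2s : N₂ ∈ A.Sep := A.sep_app hSKKs hc2
  have hsPs : sP ∈ A.Sep :=
    A.sep_app (A.sep_app A.Sc_sep (A.sep_app (A.sep_app A.Sc_sep
      (A.sep_app A.Kc_sep A.Sc_sep)) hN1s)) hN2s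
  have hsSep : s ∈ A.Sep :=
    A.sep_app (A.sep_app A.Sc_sep (A.sep_app (A.sep_app A.Sc_sep
      (A.sep_app A.Kc_sep hF)) hsPs)) (A.sep_app A.Kc_sep A.top_sep)
  -- reductions at z := c
  set e1c := T.app e₁ c with he1c
  set e2c := T.app e₂ c with he2c
  have he1u : e1c ≤ u := T.red le_rfl
  have he2v : e2c ≤ v := T.red le_rfl
  have hSKK1 : T.app (T.app SKK e₁) c ≤ T.app A.Kc e1c :=
    le_trans (A.Sc_red _ _ _) (T.app_mono (A.Kc_red _ _) le_rfl)
  have hSKK2 : T.app N₂ c ≤ T.app A.Kc e2c :=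
    le_trans (A.Sc_red _ _ _) (T.app_mono (A.Kc_red _ _) le_rfl)
  have hN₁c : T.app N₁ c ≤ T.app SI (T.app A.Kc e1c) := by
    refine le_trans (A.Sc_red _ _ _) ?_
    exact T.app_mono (A.Kc_red _ _) hSKK1
  have hsPc : T.app sP c ≤ T.app (T.app A.Sc (T.app N₁ c)) (T.app N₂ c) := by
    refine le_trans (A.Sc_red _ _ _) ?_
    exact T.app_mono (le_trans (A.Sc_red _ _ _) (T.app_mono (A.Kc_red _ _) le_rfl)) le_rfl
  have hpair : ∀ k : α, T.app (T.app sP c) k ≤ T.app (T.app k e1c) e2c := by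
    intro k
    have h1 : T.app (T.app sP c) k ≤ T.app (T.app (T.app N₁ c) k) (T.app (T.app N₂ c) k) :=
      le_trans (T.app_mono hsPc le_rfl) (A.Sc_red _ _ _)
    have h2 : T.app (T.app N₁ c) k ≤ T.app k e1c := by
      refine le_trans (T.app_mono hN₁c le_rfl) ?_
      refine le_trans (A.Sc_red _ _ _) ?_
      exact T.app_mono (A.Ic_red k) (A.Kc_red _ _)
    have h3 : T.app (T.app N₂ c) k ≤ e2c :=
      le_trans (T.app_mono hSKK2 le_rfl) (A.Kc_red _ _)
    exact le_trans h1 (T.app_mono h2 h3)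
  have hsPtimes : T.app sP c ≤ A.times u v := by
    refine le_iInf fun w => ?_
    have hk : T.app (T.app (A.imp u (A.imp v w)) e1c) e2c ≤ w :=
      T.app_le (T.app_le (le_refl (A.imp u (A.imp v w))) he1u) he2v
    have := le_trans (hpair (A.imp u (A.imp v w))) hk
    exact le_trans (T.le_app (T.app sP c) _) (A.imp_mono le_rfl this)
  have hsc : T.app s c ≤ (⊥ : α) := by
    have h1 : T.app s c ≤ T.app (T.app Fi (T.app sP c)) (⊤ : α) := by
      refine le_trans (A.Sc_red _ _ _) ?_
      refine T.app_mono (le_trans (A.Sc_red _ _ _)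
        (T.app_mono (A.Kc_red _ _) le_rfl)) (A.Kc_red _ _)
    have h2 : T.app Fi (T.app sP c) ≤ A.imp ⊤ ⊥ := T.app_le le_rfl hsPtimes
    exact le_trans h1 (T.app_le h2 le_rfl)
  constructor
  · exact A.sep_imp_of hsSep hsc
  · exact A.sep_up A.Ic_sep (le_trans (T.le_app A.Ic c)
      (le_trans (A.imp_mono le_rfl (A.Ic_red c)) (A.imp_mono bot_le le_rfl)))


end ImpAlg

/-- a wfSK family with no component Σ-equivalent to `⊥` is fSK. -/
theorem stmt13 {α : Type} [CompleteLattice α] (A : ImpAlg α)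
    {I : Type} (a : I → α) (h : A.wfSKFam a)
    (hbot : ∀ i, ¬ A.EquivS (a i) ⊥) :
    A.fSKFam a := by
  intro J b hfun hent
  obtain ⟨f, hf⟩ := h b hfun hent
  refine ⟨f, hf, fun g hg => ?_⟩
  funext i
  by_contra hne
  have e1 : A.imp (a i) (b i (f i)) ∈ A.Sep := A.sep_up hf (iInf_le _ i)
  have e2 : A.imp (a i) (b i (g i)) ∈ A.Sep := A.sep_up hg (iInf_le _ i)
  have hF : A.imp (A.times (b i (f i)) (b i (g i))) (A.imp ⊤ ⊥) ∈ A.Sep := by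
    have hd := A.sep_up hfun (le_trans (iInf_le _ i)
      (le_trans (iInf_le _ (f i)) (iInf_le _ (g i))))
    rwa [ImpAlg.delta, if_neg (fun hh => hne hh.symm)] at hd
  exact hbot i (A.bot_equiv_of e1 e2 hF)
end

section
/- A family in an implicative algebra is uniformly weakly functionally supercompact (U-wfSK) if and only if it is uniformly functionally supercompact (U-fSK). -/
namespace Pf14

variable {α : Type} [CompleteLattice α] (A : ImpAlg α)

lemma app_le {t b c t' : α} (h : t ≤ A.imp b c) (h' : t' ≤ b) :
    A.toImpStr.app t t' ≤ c :=
  sInf_le (h.trans (A.imp_mono h' le_rfl))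

lemma le_app (t t' : α) : t ≤ A.imp t' (A.toImpStr.app t t') := by
  unfold ImpStr.app
  rw [A.imp_iInf]
  exact le_iInf fun x => le_iInf fun hx => hx

lemma app_sep {s t : α} (hs : s ∈ A.Sep) (ht : t ∈ A.Sep) :
    A.toImpStr.app s t ∈ A.Sep :=
  A.sep_mp (A.sep_up hs (le_app A s t)) ht

lemma imp_iInf' (a : α) {ι : Type} (g : ι → α) :
    A.imp a (⨅ i, g i) = ⨅ i, A.imp a (g i) := by
  rw [iInf, A.imp_iInf]
  exact iInf_range

/-- The element `K = ⨅ x y, x → y → x`. -/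
def sk : α := ⨅ x : α, ⨅ y : α, A.imp x (A.imp y x)

/-- The element `S`. -/
def ss : α := ⨅ x : α, ⨅ y : α, ⨅ z : α,
  A.imp (A.imp x (A.imp y z)) (A.imp (A.imp x y) (A.imp x z))

lemma sk_sep : sk A ∈ A.Sep := A.sep_K
lemma ss_sep : ss A ∈ A.Sep := A.sep_S

lemma sk_le (x y : α) : sk A ≤ A.imp x (A.imp y x) :=
  (iInf_le _ x).trans (iInf_le _ y)

lemma ss_le (x y z : α) :
    ss A ≤ A.imp (A.imp x (A.imp y z)) (A.imp (A.imp x y) (A.imp x z)) :=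
  ((iInf_le _ x).trans (iInf_le _ y)).trans (iInf_le _ z)

/-- The identity combinator `I = S K K`. -/
def si : α := A.toImpStr.app (A.toImpStr.app (ss A) (sk A)) (sk A)

lemma si_sep : si A ∈ A.Sep :=
  app_sep A (app_sep A (ss_sep A) (sk_sep A)) (sk_sep A)

lemma si_le (x : α) : si A ≤ A.imp x x :=
  app_le A (app_le A (ss_le A x (A.imp x x) x) (sk_le A x (A.imp x x))) (sk_le A x x)

/-- Pairing: from realizers of `aa → p` and `aa → q` in the separator, build a
realizer of `aa → p × q`. -/
lemma pair_mem {u v aa p q : α} (huS : u ∈ A.Sep) (hvS : v ∈ A.Sep)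
    (hu : u ≤ A.imp aa p) (hv : v ≤ A.imp aa q) :
    ∃ P, P ∈ A.Sep ∧ P ≤ A.imp aa (A.times p q) := by
  set app := A.toImpStr.app with happ
  -- N = S (K K) v  realizes  aa → (r → q)
  set N : α := app (app (ss A) (app (sk A) (sk A))) v with hN0
  -- Ku = S (K K) u  realizes  aa → (r → p)
  set Ku : α := app (app (ss A) (app (sk A) (sk A))) u with hKu0
  -- M2 = S (K (S I)) Ku  realizes  aa → (r → (q → x))
  set M2 : α := app (app (ss A) (app (sk A) (app (ss A) (si A)))) Ku with hM20
  -- M = S (K S) M2  realizes  aa → ((r → q) → (r → x))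
  set M : α := app (app (ss A) (app (sk A) (ss A))) M2 with hM0
  -- P = S M N realizes aa → (r → x)
  set P : α := app (app (ss A) M) N with hP0
  refine ⟨P, ?_, ?_⟩
  · have hNs : N ∈ A.Sep :=
      app_sep A (app_sep A (ss_sep A) (app_sep A (sk_sep A) (sk_sep A))) hvS
    have hKus : Ku ∈ A.Sep :=
      app_sep A (app_sep A (ss_sep A) (app_sep A (sk_sep A) (sk_sep A))) huS
    have hM2s : M2 ∈ A.Sep :=
      app_sep A (app_sep A (ss_sep A)
        (app_sep A (sk_sep A) (app_sep A (ss_sep A) (si_sep A)))) hKus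
    have hMs : M ∈ A.Sep :=
      app_sep A (app_sep A (ss_sep A) (app_sep A (sk_sep A) (ss_sep A))) hM2s
    exact app_sep A (app_sep A (ss_sep A) hMs) hNs
  · rw [ImpAlg.times, imp_iInf']
    refine le_iInf fun x => ?_
    set r : α := A.imp p (A.imp q x) with hr
    have hN : N ≤ A.imp aa (A.imp r q) :=
      app_le A (app_le A (ss_le A aa q (A.imp r q))
        (app_le A (sk_le A (A.imp q (A.imp r q)) aa) (sk_le A q r))) hv
    have hKu : Ku ≤ A.imp aa (A.imp r p) :=
      app_le A (app_le A (ss_le A aa p (A.imp r p))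
        (app_le A (sk_le A (A.imp p (A.imp r p)) aa) (sk_le A p r))) hu
    have hSI : app (ss A) (si A) ≤ A.imp (A.imp r p) (A.imp r (A.imp q x)) :=
      app_le A (ss_le A r p (A.imp q x)) (si_le A r)
    have hM2 : M2 ≤ A.imp aa (A.imp r (A.imp q x)) :=
      app_le A (app_le A (ss_le A aa (A.imp r p) (A.imp r (A.imp q x)))
        (app_le A (sk_le A (A.imp (A.imp r p) (A.imp r (A.imp q x))) aa) hSI)) hKu
    have hM : M ≤ A.imp aa (A.imp (A.imp r q) (A.imp r x)) :=
      app_le A (app_le A (ss_le A aa (A.imp r (A.imp q x)) (A.imp (A.imp r q) (A.imp r x)))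
        (app_le A (sk_le A
          (A.imp (A.imp r (A.imp q x)) (A.imp (A.imp r q) (A.imp r x))) aa)
          (ss_le A r q x))) hM2
    exact app_le A (app_le A (ss_le A aa (A.imp r q) (A.imp r x)) hM) hN

end Pf14

/-- a family is U-wfSK iff it is U-fSK. -/
theorem stmt14 {α : Type} [CompleteLattice α] (A : ImpAlg α)
    {I : Type} (a : I → α) :
    A.UwfSKFam a ↔ A.UfSKFam a := by
  constructor
  · intro H K f J b hb hp
    obtain ⟨g, hg⟩ := H f b hb hp
    refine ⟨g, hg, fun g' hg' => funext fun k => ?_⟩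
    by_contra hne
    -- realizers for a (f k) ⊢ b k (g' k) and a (f k) ⊢ b k (g k)
    have hu : (⨅ k, A.imp ((a ∘ f) k) (b k (g' k))) ≤
        A.imp (a (f k)) (b k (g' k)) := iInf_le _ k
    have hv : (⨅ k, A.imp ((a ∘ f) k) (b k (g k))) ≤
        A.imp (a (f k)) (b k (g k)) := iInf_le _ k
    obtain ⟨P, hPsep, hPle⟩ := Pf14.pair_mem A hg' hg hu hv
    -- functionality realizer, specialized
    have hF : (⨅ i, ⨅ j, ⨅ j', A.imp (A.times (b i j) (b i j')) (A.delta j j')) ≤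
        A.imp (A.times (b k (g' k)) (b k (g k))) (A.delta (g' k) (g k)) :=
      ((iInf_le _ k).trans (iInf_le _ (g' k))).trans (iInf_le _ (g k))
    -- Q realizes a (f k) ⊢ δ(g' k, g k) = ⊤ → ⊥
    set Q : α := A.toImpStr.app (A.toImpStr.app (Pf14.ss A)
      (A.toImpStr.app (Pf14.sk A)
        (⨅ i, ⨅ j, ⨅ j', A.imp (A.times (b i j) (b i j')) (A.delta j j')))) P with hQ0
    have hQsep : Q ∈ A.Sep :=
      Pf14.app_sep A (Pf14.app_sep A (Pf14.ss_sep A)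
        (Pf14.app_sep A (Pf14.sk_sep A) hb)) hPsep
    have hQle : Q ≤ A.imp (a (f k)) (A.delta (g' k) (g k)) :=
      Pf14.app_le A (Pf14.app_le A
        (Pf14.ss_le A (a (f k)) (A.times (b k (g' k)) (b k (g k))) (A.delta (g' k) (g k)))
        (Pf14.app_le A (Pf14.sk_le A
          (A.imp (A.times (b k (g' k)) (b k (g k))) (A.delta (g' k) (g k))) (a (f k))) hF))
        hPle
    have hδ : A.delta (g' k) (g k) = A.imp ⊤ ⊥ := if_neg hne
    rw [hδ] at hQle
    -- empty-family trick at index f k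
    set bE : Unit → Empty → α := fun _ e => e.elim with hbE
    have hfunc : A.TimesFunctional bE :=
      A.sep_up A.sep_K (le_iInf fun _ => le_iInf fun j => j.elim)
    have hprem : (⨅ u : Unit, A.imp ((a ∘ fun _ : Unit => f k) u) (A.Eex (bE u))) ∈ A.Sep := by
      refine A.sep_up hQsep (le_iInf fun _ => hQle.trans (A.imp_mono le_rfl ?_))
      exact le_iInf fun x => A.imp_mono le_top bot_le
    obtain ⟨h, -⟩ := H (fun _ : Unit => f k) bE hfunc hprem
    exact (h ()).elim
  · intro H K f J b hb hp
    exact (H f b hb hp).exists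
end

section
/- If the separator Σ of an implicative algebra is closed under arbitrary infima, then every componentwise supercompact family is uniformly supercompact (U-SK). -/
/-- if the separator is closed under arbitrary infima, then every
componentwise supercompact family is U-SK. -/
theorem stmt15 {α : Type} [CompleteLattice α] (A : ImpAlg α)
    (hinf : ∀ {I : Type} (c : I → α), (∀ i, c i ∈ A.Sep) → (⨅ i, c i) ∈ A.Sep)
    {I : Type} (a : I → α) (h : A.cSKFam a) :
    A.USKFam a := by
  intro K f J b hb
  have h1 : ∀ k, A.Ent (a (f k)) (A.Eex (b k)) := fun k =>
    A.sep_up hb (iInf_le _ k)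
  choose g hg using fun k => h (f k) (b k) (h1 k)
  exact ⟨g, hinf _ hg⟩
end

section
/- Let P be the tripos of an implicative algebra A. A predicate φ ∈ P(I) is a supercompact predicate (SK_p: whenever φ ≤ ∃_f(ψ) for f : J → I and ψ ∈ P(J), there exists g : I → J with f∘g = id_I and φ ≤ P_g(ψ)) if and only if the family (φ(i))_{i∈I} is SK in A. -/
namespace ImpAlg

variable {α : Type} [CompleteLattice α] (A : ImpAlg α)

/-- Entailment in the fibre over `I` of the implicative tripos. -/
def TEnt {I : Type} (φ ψ : I → α) : Prop :=
  (⨅ i, A.imp (φ i) (ψ i)) ∈ A.Sep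

/-- The left adjoint `∃_f` of the implicative tripos:
`(∃_f ψ)(i) = ∃_{j : f j = i} ψ(j)`. -/
def TEx {I J : Type} (f : J → I) (ψ : J → α) : I → α :=
  fun i => A.Eex (fun j : { j // f j = i } => ψ j.1)

/-- Supercompact predicate (SK_p). -/
def SKp {I : Type} (φ : I → α) : Prop :=
  ∀ {J : Type} (f : J → I) (ψ : J → α), A.TEnt φ (A.TEx f ψ) →
    ∃ g : I → J, f ∘ g = id ∧ A.TEnt φ (ψ ∘ g)

end ImpAlg

/-- a predicate `φ ∈ P(I)` of the implicative tripos is supercompact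
(SK_p) iff the family `(φ i)_{i ∈ I}` is SK in the implicative algebra. -/
theorem stmt18 {α : Type} [CompleteLattice α] (A : ImpAlg α)
    {I : Type} (φ : I → α) :
    A.SKp φ ↔ A.SKFam φ := by
  constructor
  · intro hsk J b hb
    set f : (Σ i, J i) → I := Sigma.fst with hf
    have key : ∀ i, A.Eex (b i) = A.TEx f (fun p : Σ i, J i => b p.1 p.2) i := by
      intro i
      unfold ImpAlg.TEx ImpAlg.Eex
      refine iInf_congr fun x => ?_
      congr 1
      apply le_antisymm
      · refine le_iInf fun p => ?_
        obtain ⟨⟨i', j⟩, h⟩ := p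
        subst h
        exact iInf_le _ j
      · exact le_iInf fun j => iInf_le _ (⟨⟨i, j⟩, rfl⟩ : {p : (Σ i, J i) // f p = i})
    have hent : A.TEnt φ (A.TEx f fun p : Σ i, J i => b p.1 p.2) := by
      unfold ImpAlg.TEnt
      have heq : (⨅ i, A.imp (φ i) (A.TEx f (fun p : Σ i, J i => b p.1 p.2) i))
          = ⨅ i, A.imp (φ i) (A.Eex (b i)) := iInf_congr fun i => by rw [key i]
      rw [heq]; exact hb
    obtain ⟨g, hg, hψ⟩ := hsk f _ hent
    have hgi : ∀ i, (g i).1 = i := fun i => congrFun hg i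
    refine ⟨fun i => (hgi i) ▸ (g i).2, ?_⟩
    have hcast : ∀ (s : Σ i, J i) (i) (h : s.1 = i), b s.1 s.2 = b i (h ▸ s.2) := by
      rintro ⟨i', j⟩ i rfl; rfl
    have heq2 : (⨅ i, A.imp (φ i) (b i ((hgi i) ▸ (g i).2)))
        = ⨅ i, A.imp (φ i) (b (g i).1 (g i).2) :=
      iInf_congr fun i => by rw [← hcast (g i) i (hgi i)]
    rw [heq2]; exact hψ
  · intro hsk J f ψ hent
    obtain ⟨c, hc⟩ := hsk (fun i => {j // f j = i}) (fun i j => ψ j.1) hent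
    exact ⟨fun i => (c i).1, funext fun i => (c i).2, hc⟩
end
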